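/- Let N be an n×n real symmetric positive semidefinite matrix, Q a p×p real symmetric positive definite matrix, B an n×p real matrix, a, ℓ ∈ ℝⁿ and c ∈ ℝ. Then inf_{w ∈ ℝᵖ} [ ½ (a + B w)ᵀ N (a + B w) + ℓᵀ (a + B w) + c + ½ wᵀ Q w ] = ½ aᵀ h a + ℓ̃ᵀ a + c̃, where h := N − N B (Q + Bᵀ N B)⁻¹ Bᵀ N, ℓ̃ := ℓ − N B (Q + Bᵀ N B)⁻¹ Bᵀ ℓ, and c̃ := c − ½ ℓᵀ B (Q + Bᵀ N B)⁻¹ Bᵀ ℓ, and the infimum is attained. -/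

import Mathlib

/-! With `S = Q + Bᵀ N B` the cost is `½ wᵀ S w + gᵀ w + K` for `g = Bᵀ (N a + ℓ)` and
`K = ½ aᵀ N a + ℓᵀ a + c`. As `S` is positive definite, completing the square shows that the
minimum is `K - ½ gᵀ S⁻¹ g`, attained at `w = -S⁻¹ g`; expanding `gᵀ S⁻¹ g` in `a` produces
`h`, `ℓ̃` and `c̃`. -/

open Matrix

noncomputable section

/-- `F(w) := ½ (a + B w)ᵀ N (a + B w) + ℓᵀ (a + B w) + c + ½ wᵀ Q w`. -/
def quadCost {n p : ℕ} (N : Matrix (Fin n) (Fin n) ℝ) (Q : Matrix (Fin p) (Fin p) ℝ)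
    (B : Matrix (Fin n) (Fin p) ℝ) (a ell : Fin n → ℝ) (c : ℝ) (w : Fin p → ℝ) : ℝ :=
  (1 / 2) * ((a + B.mulVec w) ⬝ᵥ N.mulVec (a + B.mulVec w))
    + ell ⬝ᵥ (a + B.mulVec w) + c + (1 / 2) * (w ⬝ᵥ Q.mulVec w)

namespace Matrix

section CommSemiring

variable {ι κ μ R : Type*} [Fintype κ] [CommSemiring R]

theorem IsSymm.dotProduct_mulVec_comm [Fintype ι] {A : Matrix ι ι R} (hA : A.IsSymm)
    (x y : ι → R) :
    x ⬝ᵥ A *ᵥ y = y ⬝ᵥ A *ᵥ x := by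
  rw [← dotProduct_transpose_mulVec, hA.eq]

theorem dotProduct_mul_mul_transpose_mulVec [Fintype ι] [Fintype μ] (A : Matrix ι κ R)
    (P : Matrix κ κ R) (C : Matrix μ κ R) (x : ι → R) (y : μ → R) :
    x ⬝ᵥ (A * P * Cᵀ) *ᵥ y = (Aᵀ *ᵥ x) ⬝ᵥ P *ᵥ (Cᵀ *ᵥ y) := by
  rw [← mulVec_mulVec, ← mulVec_mulVec, dotProduct_mulVec, ← mulVec_transpose A x]

end CommSemiring

variable {ι κ : Type*} [Fintype ι] [Fintype κ]

theorem IsSymm.dotProduct_add_mulVec_add {R : Type*} [CommRing R] {P : Matrix ι ι R}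
    (hP : P.IsSymm) (x y : ι → R) :
    (x + y) ⬝ᵥ P *ᵥ (x + y) = x ⬝ᵥ P *ᵥ x + 2 * (x ⬝ᵥ P *ᵥ y) + y ⬝ᵥ P *ᵥ y := by
  rw [mulVec_add, dotProduct_add, add_dotProduct, add_dotProduct,
    hP.dotProduct_mulVec_comm y x]
  ring

theorem IsSymm.quadratic_eq_completeSquare {R : Type*} [Field R] [CharZero R] [DecidableEq ι]
    {S : Matrix ι ι R} (hS : S.IsSymm) (hdet : IsUnit S.det) (g w : ι → R) (K : R) :
    (1 / 2) * (w ⬝ᵥ S *ᵥ w) + g ⬝ᵥ w + K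
      = (1 / 2) * ((w + S⁻¹ *ᵥ g) ⬝ᵥ S *ᵥ (w + S⁻¹ *ᵥ g))
        + (K - (1 / 2) * (g ⬝ᵥ S⁻¹ *ᵥ g)) := by
  have hSu : S *ᵥ (S⁻¹ *ᵥ g) = g := by
    rw [mulVec_mulVec, mul_nonsing_inv _ hdet, one_mulVec]
  rw [hS.dotProduct_add_mulVec_add, hSu, dotProduct_comm w g, dotProduct_comm _ g]
  ring

theorem PosDef.isLeast_range_quadratic [DecidableEq ι] {S : Matrix ι ι ℝ} (hS : S.PosDef)
    (g : ι → ℝ) (K : ℝ) :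
    IsLeast (Set.range fun w => (1 / 2) * (w ⬝ᵥ S *ᵥ w) + g ⬝ᵥ w + K)
      (K - (1 / 2) * (g ⬝ᵥ S⁻¹ *ᵥ g)) := by
  have hSymm : S.IsSymm := by simpa using hS.isHermitian
  simp_rw [hSymm.quadratic_eq_completeSquare ((isUnit_iff_isUnit_det S).mp hS.isUnit) g]
  refine ⟨⟨-(S⁻¹ *ᵥ g), by simp⟩, ?_⟩
  rintro _ ⟨w, rfl⟩
  have hnonneg := hS.posSemidef.dotProduct_mulVec_nonneg (w + S⁻¹ *ᵥ g)
  simp only [star_trivial] at hnonneg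
  dsimp only
  linarith

theorem IsSymm.sub_half_dotProduct_transpose_mulVec_eq {N : Matrix ι ι ℝ} (hN : N.IsSymm)
    (B : Matrix ι κ ℝ) {P : Matrix κ κ ℝ} (hP : P.IsSymm) (a ell : ι → ℝ) (c : ℝ) :
    (1 / 2) * (a ⬝ᵥ N *ᵥ a) + ell ⬝ᵥ a + c
        - (1 / 2) * (Bᵀ *ᵥ (N *ᵥ a + ell) ⬝ᵥ P *ᵥ (Bᵀ *ᵥ (N *ᵥ a + ell)))
      = (1 / 2) * (a ⬝ᵥ (N - N * B * P * Bᵀ * N) *ᵥ a)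
        + (ell - (N * B * P * Bᵀ) *ᵥ ell) ⬝ᵥ a
        + (c - (1 / 2) * (ell ⬝ᵥ (B * P * Bᵀ) *ᵥ ell)) := by
  have hNB : N * B * P * Bᵀ * N = N * B * P * (N * B)ᵀ := by
    rw [transpose_mul, hN.eq, Matrix.mul_assoc (N * B * P)]
  have hg : Bᵀ *ᵥ (N *ᵥ a + ell) = (N * B)ᵀ *ᵥ a + Bᵀ *ᵥ ell := by
    rw [mulVec_add, transpose_mul, hN.eq, mulVec_mulVec]
  rw [sub_mulVec, dotProduct_sub, sub_dotProduct, hNB,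
    dotProduct_comm ((N * B * P * Bᵀ) *ᵥ ell) a]
  simp only [dotProduct_mul_mul_transpose_mulVec]
  rw [hg, hP.dotProduct_add_mulVec_add]
  ring

end Matrix

theorem quadCost_eq {n p : ℕ} {N : Matrix (Fin n) (Fin n) ℝ} (hN : N.IsSymm)
    (Q : Matrix (Fin p) (Fin p) ℝ) (B : Matrix (Fin n) (Fin p) ℝ) (a ell : Fin n → ℝ) (c : ℝ)
    (w : Fin p → ℝ) :
    quadCost N Q B a ell c w
      = (1 / 2) * (w ⬝ᵥ (Q + Bᵀ * N * B) *ᵥ w) + Bᵀ *ᵥ (N *ᵥ a + ell) ⬝ᵥ w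
        + ((1 / 2) * (a ⬝ᵥ N *ᵥ a) + ell ⬝ᵥ a + c) := by
  have hquad : w ⬝ᵥ (Bᵀ * N * B) *ᵥ w = B *ᵥ w ⬝ᵥ N *ᵥ (B *ᵥ w) := by
    simpa only [transpose_transpose] using dotProduct_mul_mul_transpose_mulVec Bᵀ N Bᵀ w w
  rw [quadCost, add_mulVec, dotProduct_add w, hquad, dotProduct_comm _ w,
    dotProduct_transpose_mulVec]
  simp only [mulVec_add, dotProduct_add, add_dotProduct]
  rw [dotProduct_comm (N *ᵥ a), hN.dotProduct_mulVec_comm (B *ᵥ w) a]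
  ring

/-- With `N` symmetric positive semidefinite and `Q` symmetric positive definite,
`inf_w F(w) = ½ aᵀ h a + ℓ̃ᵀ a + c̃` with
`h = N − N B (Q + Bᵀ N B)⁻¹ Bᵀ N`, `ℓ̃ = ℓ − N B (Q + Bᵀ N B)⁻¹ Bᵀ ℓ`,
`c̃ = c − ½ ℓᵀ B (Q + Bᵀ N B)⁻¹ Bᵀ ℓ`, and the infimum is attained. -/
theorem quadCost_inf_formula {n p : ℕ}
    (N : Matrix (Fin n) (Fin n) ℝ) (hN : N.PosSemidef)
    (Q : Matrix (Fin p) (Fin p) ℝ) (hQ : Q.PosDef)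
    (B : Matrix (Fin n) (Fin p) ℝ) (a ell : Fin n → ℝ) (c : ℝ) :
    sInf (Set.range (quadCost N Q B a ell c)) =
      (1 / 2) * (a ⬝ᵥ (N - N * B * (Q + Bᵀ * N * B)⁻¹ * Bᵀ * N).mulVec a)
        + (ell - (N * B * (Q + Bᵀ * N * B)⁻¹ * Bᵀ).mulVec ell) ⬝ᵥ a
        + (c - (1 / 2) * (ell ⬝ᵥ (B * (Q + Bᵀ * N * B)⁻¹ * Bᵀ).mulVec ell)) ∧
    ∃ w : Fin p → ℝ,
      quadCost N Q B a ell c w = sInf (Set.range (quadCost N Q B a ell c)) := by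
  have hNsymm : N.IsSymm := by simpa using hN.isHermitian
  have hS : (Q + Bᵀ * N * B).PosDef :=
    hQ.add_posSemidef (by simpa using hN.conjTranspose_mul_mul_same B)
  have hSinv : (Q + Bᵀ * N * B)⁻¹.IsSymm := by simpa using hS.inv.isHermitian
  have hleast := hS.isLeast_range_quadratic (Bᵀ *ᵥ (N *ᵥ a + ell))
    ((1 / 2) * (a ⬝ᵥ N *ᵥ a) + ell ⬝ᵥ a + c)
  rw [hNsymm.sub_half_dotProduct_transpose_mulVec_eq B hSinv] at hleast
  obtain ⟨w, hw⟩ := hleast.1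
  rw [funext (quadCost_eq hNsymm Q B a ell c), hleast.csInf_eq]
  exact ⟨rfl, w, hw⟩

end
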